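/- (Weak–strong coupling up to biting.) Let Ω ⊂ ℝ^n be a bounded measurable set, q ∈ (1,∞), q' = q/(q−1), and let ω : Ω → (0,∞) be measurable, a.e. finite and positive. Let (f_k) ⊂ L^{q'}_ω(Ω) converge weakly in L^{q'}_ω(Ω) to f (i.e. ∫_Ω f_k h ω dx → ∫_Ω f h ω dx for every h ∈ L^q_ω(Ω)), and let (g_k) be measurable functions with sup_k ‖g_k‖_{L^q_ω(Ω)} < ∞ and g_k → g almost everywhere in Ω. Then g ∈ L^q_ω(Ω) and there exists a non-decreasing sequence of measurable sets Ω_j ⊂ Ω with |Ω \ Ω_j| → 0 as j → ∞ such that for every j, f_k g_k ω ⇀ f g ω weakly in L^1(Ω_j), i.e. ∫_{Ω_j} f_k g_k ω φ dx → ∫_{Ω_j} f g ω φ dx for every φ ∈ L^∞(Ω_j). -/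

import Mathlib

open MeasureTheory Filter Topology Metric Matrix
open scoped ENNReal NNReal

noncomputable section

abbrev E (n : ℕ) := EuclideanSpace ℝ (Fin n)
abbrev Mat (n : ℕ) := Matrix (Fin n) (Fin n) ℝ

/-- Frobenius inner product of two matrices. -/
def dotM {n : ℕ} (A B : Mat n) : ℝ := ∑ i, ∑ j, A i j * B i j

/-- Frobenius norm of a matrix. -/
def normM {n : ℕ} (A : Mat n) : ℝ := Real.sqrt (dotM A A)

/-- Symmetric part of a matrix. -/
def symM {n : ℕ} (A : Mat n) : Mat n := (2⁻¹ : ℝ) • (A + Aᵀ)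

/-- A smooth scalar test function compactly supported in `Ω`. -/
def IsTest {n : ℕ} (Ω : Set (E n)) (φ : E n → ℝ) : Prop :=
  ContDiff ℝ (⊤ : ℕ∞) φ ∧ HasCompactSupport φ ∧ tsupport φ ⊆ Ω

/-- A smooth vector-valued test function compactly supported in `Ω`. -/
def IsTestV {n : ℕ} (Ω : Set (E n)) (φ : E n → E n) : Prop :=
  ContDiff ℝ (⊤ : ℕ∞) φ ∧ HasCompactSupport φ ∧ tsupport φ ⊆ Ω

/-- Partial derivative `∂_j φ`. -/
def pd {n : ℕ} (j : Fin n) (φ : E n → ℝ) (x : E n) : ℝ :=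
  fderiv ℝ φ x (EuclideanSpace.single j 1)

/-- Gradient matrix of a vector field, `(∇φ)_{ij} = ∂_j φ^i`. -/
def gradV {n : ℕ} (φ : E n → E n) (x : E n) : Mat n :=
  Matrix.of fun i j => (fderiv ℝ φ x (EuclideanSpace.single j 1)) i

/-- Divergence of a vector field. -/
def divV {n : ℕ} (φ : E n → E n) (x : E n) : ℝ :=
  ∑ i, (fderiv ℝ φ x (EuclideanSpace.single i 1)) i

/-- `V` is the weak (distributional) gradient of `v` on `Ω`. -/
def IsWeakGrad {n : ℕ} (Ω : Set (E n)) (v : E n → E n) (V : E n → Mat n) : Prop :=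
  ∀ (i j : Fin n) (φ : E n → ℝ), IsTest Ω φ →
    ∫ x in Ω, v x i * pd j φ x = - ∫ x in Ω, V x i j * φ x

/-- Weighted `L^p` norm of a matrix field. -/
def wLpM {n : ℕ} (Ω : Set (E n)) (p : ℝ) (ω : E n → ℝ) (F : E n → Mat n) : ℝ≥0∞ :=
  (∫⁻ x in Ω, ENNReal.ofReal (normM (F x) ^ p * ω x)) ^ (1/p)

/-- Weighted `L^p` norm of a vector field. -/
def wLpV {n : ℕ} (Ω : Set (E n)) (p : ℝ) (ω : E n → ℝ) (F : E n → E n) : ℝ≥0∞ :=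
  (∫⁻ x in Ω, ENNReal.ofReal (‖F x‖ ^ p * ω x)) ^ (1/p)

/-- Weighted `L^p` norm of a scalar field. -/
def wLpS {n : ℕ} (Ω : Set (E n)) (p : ℝ) (ω : E n → ℝ) (F : E n → ℝ) : ℝ≥0∞ :=
  (∫⁻ x in Ω, ENNReal.ofReal (|F x| ^ p * ω x)) ^ (1/p)

/-- A weight: measurable, a.e. positive and finite. -/
def IsWeight {n : ℕ} (ω : E n → ℝ) : Prop := Measurable ω ∧ ∀ᵐ x, 0 < ω x

/-- `A` is an admissible Muckenhoupt `A_p` constant for `ω` (`1 < p`). -/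
def ApBound {n : ℕ} (p : ℝ) (ω : E n → ℝ) (A : ℝ) : Prop :=
  ∀ (c : E n) (r : ℝ), 0 < r →
    (⨍ x in ball c r, ω x) * (⨍ x in ball c r, ω x ^ (-(p - 1)⁻¹)) ^ (p - 1) ≤ A

/-- `ω` belongs to the Muckenhoupt class `A_p`. -/
def IsAp {n : ℕ} (p : ℝ) (ω : E n → ℝ) : Prop := IsWeight ω ∧ ∃ A, ApBound p ω A

/-- Membership `v ∈ W^{1,p}_{0,ω}(Ω)` with weak gradient `V`:
closure of test functions in the weighted Sobolev norm. -/
def MemW1p0 {n : ℕ} (Ω : Set (E n)) (p : ℝ) (ω : E n → ℝ)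
    (v : E n → E n) (V : E n → Mat n) : Prop :=
  IsWeakGrad Ω v V ∧ AEMeasurable v (volume.restrict Ω) ∧
  (∀ i j, AEMeasurable (fun x => V x i j) (volume.restrict Ω)) ∧
  wLpV Ω p ω v < ⊤ ∧ wLpM Ω p ω V < ⊤ ∧
  ∃ φ : ℕ → E n → E n, (∀ k, IsTestV Ω (φ k)) ∧
    Tendsto (fun k => wLpV Ω p ω (fun x => v x - φ k x)
      + wLpM Ω p ω (fun x => V x - gradV (φ k) x)) atTop (𝓝 0)

/-- `Ω` has `C^1` boundary: near every boundary point and after a rigid motion,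
`Ω` coincides with the open region above the graph of a `C^1` function
of the remaining coordinates. -/
def HasC1Boundary {n : ℕ} (Ω : Set (E n)) : Prop :=
  ∀ x ∈ frontier Ω, ∃ (e : E n ≃ᵢ E n) (ψ : E n → ℝ) (j : Fin n) (r : ℝ),
    0 < r ∧ ContDiff ℝ 1 ψ ∧
    (∀ y z : E n, (∀ i, i ≠ j → y i = z i) → ψ y = ψ z) ∧
    ball x r ∩ Ω = ball x r ∩ (e ⁻¹' {y : E n | ψ y < y j})

/-- Assumption A of the paper. -/
structure AssumptionA {n : ℕ} (Ω : Set (E n)) (S : E n → Mat n → Mat n)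
    (c0 c1 c2 μ : ℝ) : Prop where
  c0_pos : 0 < c0
  c1_pos : 0 < c1
  c2_pos : 0 < c2
  mu_pos : 0 < μ
  meas : ∀ Q : Mat n, ∀ i j, Measurable fun x => S x Q i j
  cont : ∀ x : E n, ∀ i j, Continuous fun Q : Mat n => S x Q i j
  coercive : ∀ᵐ x ∂(volume.restrict Ω), ∀ Q : Mat n,
    c0 * normM (symM Q) ^ 2 - c2 ≤ dotM (S x (symM Q)) Q
  growth : ∀ᵐ x ∂(volume.restrict Ω), ∀ Q : Mat n,
    normM (S x (symM Q)) ≤ c1 * normM Q + c2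
  monotone : ∀ᵐ x ∂(volume.restrict Ω), ∀ Q P : Mat n,
    0 ≤ dotM (S x (symM Q) - S x (symM P)) (Q - P)
  linear_at_infinity : ∀ ε > 0, ∃ m : ℝ, ∀ᵐ x ∂(volume.restrict Ω), ∀ Q : Mat n,
    m ≤ normM (symM Q) → normM (S x (symM Q) - μ • symM Q) ≤ ε * normM (symM Q)

/-- Assumption B of the paper. -/
structure AssumptionB {n : ℕ} (Ω : Set (E n)) (S : E n → Mat n → Mat n) (μ : ℝ) : Prop where
  strict_monotone : ∀ᵐ x ∂(volume.restrict Ω), ∀ Q P : Mat n, symM Q ≠ symM P →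
    0 < dotM (S x (symM Q) - S x (symM P)) (Q - P)
  derivative : ∃ DS : E n → Mat n → Mat n →ₗ[ℝ] Mat n,
    (∀ᵐ x ∂(volume.restrict Ω), ∀ Q : Mat n, Qᵀ = Q →
      ∀ ε > 0, ∃ δ > 0, ∀ H : Mat n, normM H ≤ δ →
        normM (S x (Q + H) - S x Q - DS x Q H) ≤ ε * normM H) ∧
    (∀ ε > 0, ∃ m : ℝ, ∀ᵐ x ∂(volume.restrict Ω), ∀ Q : Mat n, Qᵀ = Q →
      m ≤ normM Q → ∀ H : Mat n, normM (DS x Q H - μ • H) ≤ ε * normM H)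

/-- Distributional solution of `-div S(x, ε(v)) + ∇π = -div f` on `Ω`,
where `V` is the weak gradient of the velocity. -/
def StokesSol {n : ℕ} (Ω : Set (E n)) (S : E n → Mat n → Mat n) (f : E n → Mat n)
    (V : E n → Mat n) (π : E n → ℝ) : Prop :=
  ∀ φ : E n → E n, IsTestV Ω φ →
    ∫ x in Ω, (dotM (S x (symM (V x))) (gradV φ x) - π x * divV φ x)
      = ∫ x in Ω, dotM (f x) (gradV φ x)


theorem WSC.unionUnif {α β : Type*} [UniformSpace β] {F : ℕ → α → β} {f : α → β}
    {s t : Set α} (hs : TendstoUniformlyOn F f atTop s) (ht : TendstoUniformlyOn F f atTop t) :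
    TendstoUniformlyOn F f atTop (s ∪ t) := by
  intro u hu
  filter_upwards [hs u hu, ht u hu] with k h1 h2 x hx
  rcases hx with hx | hx
  · exact h1 x hx
  · exact h2 x hx

theorem WSC.integral_wd {α : Type*} [MeasurableSpace α] (ν : Measure α) {ω : α → ℝ}
    (hωm : Measurable ω) (hω : ∀ᵐ x ∂ν, 0 ≤ ω x) (G : α → ℝ) :
    ∫ x, G x ∂(ν.withDensity fun x => ENNReal.ofReal (ω x)) = ∫ x, ω x * G x ∂ν := by
  have h1 : (fun x => ENNReal.ofReal (ω x)) = fun x => (((ω x).toNNReal : ℝ≥0) : ℝ≥0∞) := rfl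
  rw [h1, integral_withDensity_eq_integral_smul hωm.real_toNNReal]
  refine integral_congr_ae ?_
  filter_upwards [hω] with x hx
  simp [NNReal.smul_def, Real.coe_toNNReal _ hx]

theorem WSC.integrable_wd {α : Type*} [MeasurableSpace α] (ν : Measure α) {ω : α → ℝ}
    (hωm : Measurable ω) (hω : ∀ᵐ x ∂ν, 0 ≤ ω x) (G : α → ℝ) :
    Integrable G (ν.withDensity fun x => ENNReal.ofReal (ω x)) ↔
      Integrable (fun x => ω x * G x) ν := by
  have h1 : (fun x => ENNReal.ofReal (ω x)) = fun x => (((ω x).toNNReal : ℝ≥0) : ℝ≥0∞) := rfl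
  rw [h1, integrable_withDensity_iff_integrable_smul₀ hωm.real_toNNReal.aemeasurable]
  refine integrable_congr ?_
  filter_upwards [hω] with x hx
  simp [NNReal.smul_def, Real.coe_toNNReal _ hx]

theorem WSC.wLpS_eq {n : ℕ} (Ω : Set (E n)) {r : ℝ} (hr : 0 < r) {ω : E n → ℝ}
    (hωm : Measurable ω) (hω : ∀ᵐ x ∂(volume.restrict Ω), 0 ≤ ω x) {F : E n → ℝ}
    (hF : AEMeasurable F (volume.restrict Ω)) :
    wLpS Ω r ω F = eLpNorm F (ENNReal.ofReal r)
      ((volume.restrict Ω).withDensity fun x => ENNReal.ofReal (ω x)) := by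
  have hp0 : ENNReal.ofReal r ≠ 0 := ne_of_gt (ENNReal.ofReal_pos.mpr hr)
  rw [eLpNorm_eq_lintegral_rpow_enorm_toReal hp0 ENNReal.ofReal_ne_top, ENNReal.toReal_ofReal hr.le]
  have hg : AEMeasurable (fun x => ‖F x‖ₑ ^ r) (volume.restrict Ω) :=
    (ENNReal.continuous_rpow_const.measurable.comp_aemeasurable hF.enorm)
  rw [lintegral_withDensity_eq_lintegral_mul₀ hωm.ennreal_ofReal.aemeasurable hg]
  simp only [wLpS]
  congr 1
  refine lintegral_congr_ae ?_
  filter_upwards [hω] with x hx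
  rw [Pi.mul_apply, ENNReal.ofReal_mul (Real.rpow_nonneg (abs_nonneg _) r),
      ← ENNReal.ofReal_rpow_of_nonneg (abs_nonneg _) hr.le, ← Real.enorm_eq_ofReal_abs]
  exact mul_comm _ _

theorem WSC.exists_pairingCLM {α : Type*} [MeasurableSpace α] {μ : Measure α} {p p' : ℝ≥0∞}
    [Fact (1 ≤ p)] (hpp' : 1/p' + 1/p = 1) {f : α → ℝ} (hf : MemLp f p' μ) :
    ∃ T : Lp ℝ p μ →L[ℝ] ℝ, ∀ H : Lp ℝ p μ, T H = ∫ x, f x * (H : α → ℝ) x ∂μ := by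
  have h11 : (1 : ℝ≥0∞)/1 = 1/p' + 1/p := by rw [hpp']; simp
  haveI : ENNReal.HolderTriple p' p 1 := ⟨by simpa [one_div] using hpp'⟩
  have hint : ∀ H : Lp ℝ p μ, Integrable (fun x => f x * (H : α → ℝ) x) μ := by
    intro H
    have h1 : MemLp (f • (H : α → ℝ)) 1 μ := (Lp.memLp H).smul hf
    have h2 := memLp_one_iff_integrable.mp h1
    exact h2
  have hbound : ∀ H : Lp ℝ p μ,
      ‖∫ x, f x * (H : α → ℝ) x ∂μ‖ ≤ (eLpNorm f p' μ).toReal * ‖H‖ := by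
    intro H
    have hsm : AEStronglyMeasurable (fun x => f x * (H : α → ℝ) x) μ :=
      hf.1.mul (Lp.memLp H).1
    have hsnorm : eLpNorm (fun x => f x * (H : α → ℝ) x) 1 μ
        ≤ eLpNorm f p' μ * eLpNorm (H : α → ℝ) p μ := by
      have := eLpNorm_smul_le_mul_eLpNorm (p := p') (q := p) (r := 1) (Lp.memLp H).1 hf.1
      exact this
    calc ‖∫ x, f x * (H : α → ℝ) x ∂μ‖ ≤ ∫ x, ‖f x * (H : α → ℝ) x‖ ∂μ :=
          norm_integral_le_integral_norm _
      _ = (∫⁻ x, ‖f x * (H : α → ℝ) x‖ₑ ∂μ).toReal := integral_norm_eq_lintegral_enorm hsm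
      _ = (eLpNorm (fun x => f x * (H : α → ℝ) x) 1 μ).toReal := by
          rw [eLpNorm_one_eq_lintegral_enorm]
      _ ≤ ((eLpNorm f p' μ) * eLpNorm (H : α → ℝ) p μ).toReal :=
          ENNReal.toReal_mono (ENNReal.mul_ne_top hf.2.ne (Lp.memLp H).2.ne) hsnorm
      _ = (eLpNorm f p' μ).toReal * ‖H‖ := by
          rw [ENNReal.toReal_mul, Lp.norm_def]
  refine ⟨LinearMap.mkContinuous
    ({ toFun := fun H => ∫ x, f x * (H : α → ℝ) x ∂μ
       map_add' := ?_
       map_smul' := ?_ } : Lp ℝ p μ →ₗ[ℝ] ℝ) _ hbound, fun H => rfl⟩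
  · intro H G
    rw [← integral_add (hint H) (hint G)]
    refine integral_congr_ae ?_
    filter_upwards [Lp.coeFn_add H G] with x hx
    rw [hx]
    simp [mul_add]
  · intro c H
    simp only [RingHom.id_apply]
    rw [← integral_smul]
    refine integral_congr_ae ?_
    filter_upwards [Lp.coeFn_smul c H] with x hx
    rw [hx]
    simp only [Pi.smul_apply, smul_eq_mul]
    ring
set_option maxHeartbeats 2000000 in
theorem weak_strong_coupling_biting
    {n : ℕ} (Ω : Set (E n)) (hΩmeas : MeasurableSet Ω) (hΩbdd : Bornology.IsBounded Ω)
    (q : ℝ) (hq1 : 1 < q) (q' : ℝ) (hq' : q' = q / (q - 1))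
    (ω : E n → ℝ) (hωmeas : Measurable ω) (hωpos : ∀ᵐ x ∂(volume.restrict Ω), 0 < ω x)
    (f : ℕ → E n → ℝ) (fL : E n → ℝ)
    (hfmeas : ∀ k, AEMeasurable (f k) (volume.restrict Ω))
    (hfmem : ∀ k, wLpS Ω q' ω (f k) < ⊤)
    (hfLmeas : AEMeasurable fL (volume.restrict Ω))
    (hfLmem : wLpS Ω q' ω fL < ⊤)
    -- f_k ⇀ f weakly in L^{q'}_ω(Ω)
    (hweak : ∀ h : E n → ℝ, AEMeasurable h (volume.restrict Ω) → wLpS Ω q ω h < ⊤ →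
      Tendsto (fun k => ∫ x in Ω, f k x * h x * ω x) atTop
        (𝓝 (∫ x in Ω, fL x * h x * ω x)))
    (g : ℕ → E n → ℝ) (gL : E n → ℝ)
    (hgmeas : ∀ k, Measurable (g k))
    -- uniform bound of g_k in L^q_ω(Ω)
    (hgbd : ∃ M : ℝ, ∀ k, wLpS Ω q ω (g k) ≤ ENNReal.ofReal M)
    -- g_k → g almost everywhere in Ω
    (hgae : ∀ᵐ x ∂(volume.restrict Ω), Tendsto (fun k => g k x) atTop (𝓝 (gL x))) :
    -- then g ∈ L^q_ω(Ω) and the products converge weakly in L¹ up to biting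
    wLpS Ω q ω gL < ⊤ ∧
    ∃ Ωs : ℕ → Set (E n),
      (∀ j, MeasurableSet (Ωs j) ∧ Ωs j ⊆ Ω) ∧ Monotone Ωs ∧
      Tendsto (fun j => volume (Ω \ Ωs j)) atTop (𝓝 0) ∧
      ∀ j, ∀ φ : E n → ℝ, Measurable φ → (∃ M : ℝ, ∀ x, |φ x| ≤ M) →
        Tendsto (fun k => ∫ x in Ωs j, f k x * g k x * ω x * φ x) atTop
          (𝓝 (∫ x in Ωs j, fL x * gL x * ω x * φ x)) := by
  have hq0 : 0 < q := lt_trans one_pos hq1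
  have hq'1 : 1 < q' := by
    rw [hq', lt_div_iff₀ (by linarith)]; linarith
  have hq'0 : 0 < q' := lt_trans one_pos hq'1
  have hsum : 1/q' + 1/q = 1 := by rw [hq']; field_simp; ring
  haveI hνfin : IsFiniteMeasure (volume.restrict Ω) :=
    ⟨by rw [Measure.restrict_apply_univ]; exact hΩbdd.measure_lt_top⟩
  have hωnn : ∀ᵐ x ∂(volume.restrict Ω), 0 ≤ ω x := hωpos.mono fun x h => h.le
  -- measurable replacement for the limit gL
  have hgLaem : AEMeasurable gL (volume.restrict Ω) :=
    aemeasurable_of_tendsto_metrizable_ae atTop (fun k => (hgmeas k).aemeasurable) hgae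
  set gL' : E n → ℝ := hgLaem.mk gL with hgL'def
  have hgL'meas : Measurable gL' := hgLaem.measurable_mk
  have hgLeq : gL =ᵐ[volume.restrict Ω] gL' := hgLaem.ae_eq_mk
  have hgae' : ∀ᵐ x ∂(volume.restrict Ω), Tendsto (fun k => g k x) atTop (𝓝 (gL' x)) := by
    filter_upwards [hgae, hgLeq] with x h1 h2
    rwa [h2] at h1
  obtain ⟨M, hM⟩ := hgbd
  -- PART 1 : gL ∈ L^q_ω
  have hIbd : ∀ k, (∫⁻ x in Ω, ENNReal.ofReal (|g k x| ^ q * ω x)) ≤ ENNReal.ofReal M ^ q := by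
    intro k
    have h1 := hM k
    simp only [wLpS] at h1
    have h2 := ENNReal.rpow_le_rpow h1 hq0.le
    rwa [← ENNReal.rpow_mul, one_div, inv_mul_cancel₀ hq0.ne', ENNReal.rpow_one] at h2
  have hmk : ∀ k : ℕ, Measurable fun x => ENNReal.ofReal (|g k x| ^ q * ω x) := fun k =>
    (((Real.continuous_rpow_const hq0.le).measurable.comp (hgmeas k).abs).mul hωmeas).ennreal_ofReal
  have hliminf : ∫⁻ x in Ω, ENNReal.ofReal (|gL x| ^ q * ω x) ≤ ENNReal.ofReal M ^ q := by
    have h3 : ∫⁻ x in Ω, ENNReal.ofReal (|gL x| ^ q * ω x)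
        = ∫⁻ x in Ω, liminf (fun k => ENNReal.ofReal (|g k x| ^ q * ω x)) atTop := by
      refine lintegral_congr_ae ?_
      filter_upwards [hgae] with x hx
      have hcont : Tendsto (fun k => ENNReal.ofReal (|g k x| ^ q * ω x)) atTop
          (𝓝 (ENNReal.ofReal (|gL x| ^ q * ω x))) :=
        (ENNReal.continuous_ofReal.tendsto _).comp
          (((hx.abs).rpow_const (Or.inr hq0.le)).mul_const _)
      rw [hcont.liminf_eq]
    rw [h3]
    refine (lintegral_liminf_le' fun k => (hmk k).aemeasurable).trans ?_
    refine (Filter.liminf_le_liminf (Eventually.of_forall hIbd)).trans ?_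
    simp [Filter.liminf_const]
  have part1 : wLpS Ω q ω gL < ⊤ := by
    simp only [wLpS]
    refine ENNReal.rpow_lt_top_of_nonneg (by positivity) ?_
    exact ne_top_of_le_ne_top (ENNReal.rpow_ne_top_of_nonneg hq0.le ENNReal.ofReal_ne_top) hliminf
  refine ⟨part1, ?_⟩
  -- setup of weighted measure and exponents
  set μW : Measure (E n) := (volume.restrict Ω).withDensity (fun x => ENNReal.ofReal (ω x))
    with hμWdef
  have hμac : μW ≪ volume.restrict Ω := withDensity_absolutelyContinuous _ _
  set p : ℝ≥0∞ := ENNReal.ofReal q with hpdef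
  set p' : ℝ≥0∞ := ENNReal.ofReal q' with hp'def
  have hp1 : 1 ≤ p := ENNReal.one_le_ofReal.mpr hq1.le
  have hp'1 : 1 ≤ p' := ENNReal.one_le_ofReal.mpr hq'1.le
  haveI : Fact (1 ≤ p) := ⟨hp1⟩
  have hptoReal : p.toReal = q := ENNReal.toReal_ofReal hq0.le
  have hpp' : 1/p' + 1/p = 1 := by
    rw [hpdef, hp'def, one_div, one_div, ← ENNReal.ofReal_inv_of_pos hq'0,
      ← ENNReal.ofReal_inv_of_pos hq0, ← ENNReal.ofReal_add (by positivity) (by positivity)]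
    rw [← one_div, ← one_div, hsum, ENNReal.ofReal_one]
  -- the f k are in L^{q'} of the weighted measure
  have hfk_mem : ∀ k, MemLp (f k) p' μW := by
    intro k
    refine ⟨((hfmeas k).mono_ac hμac).aestronglyMeasurable, ?_⟩
    rw [← WSC.wLpS_eq Ω hq'0 hωmeas hωnn (hfmeas k)]
    exact hfmem k
  -- pairing functionals and uniform bound via Banach-Steinhaus
  choose T hT using fun k => WSC.exists_pairingCLM hpp' (hfk_mem k)
  have hμint : ∀ F H : E n → ℝ,
      ∫ x, F x * H x ∂μW = ∫ x in Ω, F x * H x * ω x := by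
    intro F H
    rw [hμWdef, WSC.integral_wd _ hωmeas hωnn]
    refine integral_congr_ae (Eventually.of_forall fun x => by ring)
  have hptwise : ∀ H : Lp ℝ p μW, ∃ C, ∀ k, ‖T k H‖ ≤ C := by
    intro H
    have hHsm : StronglyMeasurable (H : E n → ℝ) := Lp.stronglyMeasurable H
    have hHw : wLpS Ω q ω (H : E n → ℝ) < ⊤ := by
      rw [WSC.wLpS_eq Ω hq0 hωmeas hωnn (hHsm.measurable.aemeasurable)]
      exact (Lp.memLp H).2
    have hconv := hweak (H : E n → ℝ) hHsm.measurable.aemeasurable hHw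
    have heq : ∀ k, T k H = ∫ x in Ω, f k x * (H : E n → ℝ) x * ω x := fun k => by
      rw [hT k H, hμint]
    have hconv2 : Tendsto (fun k => ‖T k H‖) atTop
        (𝓝 ‖∫ x in Ω, fL x * (H : E n → ℝ) x * ω x‖) := by
      refine Filter.Tendsto.norm ?_
      refine Tendsto.congr (fun k => (heq k).symm) hconv
    obtain ⟨C, hC⟩ := hconv2.bddAbove_range
    exact ⟨C, fun k => hC ⟨k, rfl⟩⟩
  obtain ⟨C0, hC0⟩ := banach_steinhaus hptwise
  set C' : ℝ := max C0 0 with hC'def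
  have hC' : ∀ k, ‖T k‖ ≤ C' := fun k => (hC0 k).trans (le_max_left _ _)
  have hC'0 : 0 ≤ C' := le_max_right _ _
  -- Egorov sets
  have hEg : ∀ j : ℕ, ∃ t, t ⊆ (Set.univ : Set (E n)) ∧ MeasurableSet t ∧
      (volume.restrict Ω) t ≤ ENNReal.ofReal (1/((j:ℝ)+1)) ∧
      TendstoUniformlyOn g gL' atTop (Set.univ \ t) := by
    intro j
    exact tendstoUniformlyOn_of_ae_tendsto (fun k => (hgmeas k).stronglyMeasurable)
      hgL'meas.stronglyMeasurable MeasurableSet.univ (measure_ne_top _ _)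
      (hgae'.mono fun x h _ => h) (by positivity)
  choose t ht1 ht2 ht3 ht4 using hEg
  set Es : ℕ → Set (E n) := fun i =>
    Ω ∩ (t i)ᶜ ∩ {x | ω x ≤ (i:ℝ)+1} ∩ {x | |gL' x| ≤ (i:ℝ)+1} with hEsdef
  have hEsmeas : ∀ i, MeasurableSet (Es i) :=
    fun i => ((hΩmeas.inter (ht2 i).compl).inter
      (measurableSet_le hωmeas measurable_const)).inter
      (measurableSet_le hgL'meas.abs measurable_const)
  have hEsunif : ∀ i, TendstoUniformlyOn g gL' atTop (Es i) := by
    intro i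
    refine (ht4 i).mono ?_
    rintro x ⟨⟨⟨_, hxt⟩, _⟩, _⟩
    exact ⟨Set.mem_univ x, hxt⟩
  set Ωs : ℕ → Set (E n) := fun j => ⋃ i ∈ Finset.range (j+1), Es i with hΩsdef
  have hΩsmeas : ∀ j, MeasurableSet (Ωs j) := fun j =>
    (Finset.range (j+1)).measurableSet_biUnion (fun i _ => hEsmeas i)
  have hΩssub : ∀ j, Ωs j ⊆ Ω := by
    intro j
    refine Set.iUnion₂_subset fun i _ => ?_
    rintro x ⟨⟨⟨hxΩ, _⟩, _⟩, _⟩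
    exact hxΩ
  have hΩsmono : Monotone Ωs := by
    intro a b hab
    exact Set.biUnion_mono (fun i hi => Finset.mem_range.2
      (lt_of_lt_of_le (Finset.mem_range.1 hi) (by omega))) (fun i _ => le_rfl)
  have hΩsunif : ∀ j, TendstoUniformlyOn g gL' atTop (Ωs j) := by
    intro j
    induction j with
    | zero =>
      have h0 : Ωs 0 = Es 0 := by simp [hΩsdef]
      rw [h0]; exact hEsunif 0
    | succ j ih =>
      have h0 : Ωs (j+1) = Es (j+1) ∪ Ωs j := by
        rw [hΩsdef]
        simp only
        rw [Finset.range_add_one, Finset.set_biUnion_insert]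
      rw [h0]
      exact WSC.unionUnif (hEsunif (j+1)) ih
  have hΩsω : ∀ j, ∀ x ∈ Ωs j, ω x ≤ (j:ℝ)+1 := by
    intro j x hx
    obtain ⟨i, hi, hxi⟩ := Set.mem_iUnion₂.mp hx
    have : (i:ℝ) ≤ (j:ℝ) := Nat.cast_le.mpr (Nat.lt_succ_iff.mp (Finset.mem_range.1 hi))
    have h2 : ω x ≤ (i:ℝ)+1 := hxi.1.2
    linarith
  have hΩsg : ∀ j, ∀ x ∈ Ωs j, |gL' x| ≤ (j:ℝ)+1 := by
    intro j x hx
    obtain ⟨i, hi, hxi⟩ := Set.mem_iUnion₂.mp hx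
    have : (i:ℝ) ≤ (j:ℝ) := Nat.cast_le.mpr (Nat.lt_succ_iff.mp (Finset.mem_range.1 hi))
    have h2 : |gL' x| ≤ (i:ℝ)+1 := hxi.2
    linarith
  -- measure of complements tends to zero
  have hmeaszero : Tendsto (fun j => volume (Ω \ Ωs j)) atTop (𝓝 0) := by
    have hω0 : Tendsto (fun j : ℕ => (volume.restrict Ω) {x | ¬ ω x ≤ (j:ℝ)+1}) atTop (𝓝 0) := by
      have hmeasj : ∀ j : ℕ, MeasurableSet {x | ¬ ω x ≤ ((j:ℕ):ℝ)+1} := fun j =>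
        (measurableSet_le hωmeas measurable_const).compl
      have hanti : Antitone (fun j : ℕ => {x | ¬ ω x ≤ (j:ℝ)+1}) := by
        intro a b hab x hx hle
        have : (a:ℝ) ≤ (b:ℝ) := Nat.cast_le.mpr hab
        exact hx (by linarith)
      have hempty : ⋂ j : ℕ, {x | ¬ ω x ≤ (j:ℝ)+1} = (∅ : Set (E n)) := by
        ext x
        simp only [Set.mem_iInter, Set.mem_setOf_eq, Set.mem_empty_iff_false, iff_false,
          not_forall, not_not]
        obtain ⟨m, hm⟩ := exists_nat_ge (ω x)
        exact ⟨m, by linarith⟩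
      have h := tendsto_measure_iInter_atTop (μ := volume.restrict Ω)
        (fun j => (hmeasj j).nullMeasurableSet) hanti ⟨0, measure_ne_top _ _⟩
      rw [hempty, measure_empty] at h
      exact h
    have hg0 : Tendsto (fun j : ℕ => (volume.restrict Ω) {x | ¬ |gL' x| ≤ (j:ℝ)+1}) atTop (𝓝 0) := by
      have hmeasj : ∀ j : ℕ, MeasurableSet {x | ¬ |gL' x| ≤ ((j:ℕ):ℝ)+1} := fun j =>
        (measurableSet_le hgL'meas.abs measurable_const).compl
      have hanti : Antitone (fun j : ℕ => {x | ¬ |gL' x| ≤ (j:ℝ)+1}) := by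
        intro a b hab x hx hle
        have : (a:ℝ) ≤ (b:ℝ) := Nat.cast_le.mpr hab
        exact hx (by linarith)
      have hempty : ⋂ j : ℕ, {x | ¬ |gL' x| ≤ (j:ℝ)+1} = (∅ : Set (E n)) := by
        ext x
        simp only [Set.mem_iInter, Set.mem_setOf_eq, Set.mem_empty_iff_false, iff_false,
          not_forall, not_not]
        obtain ⟨m, hm⟩ := exists_nat_ge |gL' x|
        exact ⟨m, by linarith⟩
      have h := tendsto_measure_iInter_atTop (μ := volume.restrict Ω)
        (fun j => (hmeasj j).nullMeasurableSet) hanti ⟨0, measure_ne_top _ _⟩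
      rw [hempty, measure_empty] at h
      exact h
    have ht0 : Tendsto (fun j : ℕ => (volume.restrict Ω) (t j)) atTop (𝓝 0) := by
      have hof : Tendsto (fun j : ℕ => ENNReal.ofReal (1/((j:ℝ)+1))) atTop (𝓝 0) := by
        have h1 := tendsto_one_div_add_atTop_nhds_zero_nat (𝕜 := ℝ)
        have h2 := (ENNReal.continuous_ofReal.tendsto 0).comp h1
        simpa [Function.comp_def] using h2
      exact tendsto_of_tendsto_of_tendsto_of_le_of_le tendsto_const_nhds hof
        (fun j => zero_le) (fun j => ht3 j)
    have hbtend : Tendsto (fun j : ℕ => (volume.restrict Ω) (t j) +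
        ((volume.restrict Ω) {x | ¬ ω x ≤ (j:ℝ)+1} +
          (volume.restrict Ω) {x | ¬ |gL' x| ≤ (j:ℝ)+1})) atTop (𝓝 0) := by
      have := ht0.add (hω0.add hg0)
      simpa using this
    refine tendsto_of_tendsto_of_tendsto_of_le_of_le tendsto_const_nhds hbtend
      (fun j => zero_le) ?_
    intro j
    have hEsub : Es j ⊆ Ωs j := fun x hx =>
      Set.mem_biUnion (Finset.self_mem_range_succ j) hx
    have hsub : Ω \ Es j ⊆ (t j ∩ Ω) ∪ (({x | ¬ ω x ≤ (j:ℝ)+1} ∩ Ω) ∪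
        ({x | ¬ |gL' x| ≤ (j:ℝ)+1} ∩ Ω)) := by
      rintro x ⟨hxΩ, hxE⟩
      by_cases h1 : x ∈ t j
      · exact Or.inl ⟨h1, hxΩ⟩
      · by_cases h2 : ω x ≤ (j:ℝ)+1
        · by_cases h3 : |gL' x| ≤ (j:ℝ)+1
          · exact absurd ⟨⟨⟨hxΩ, h1⟩, h2⟩, h3⟩ hxE
          · exact Or.inr (Or.inr ⟨h3, hxΩ⟩)
        · exact Or.inr (Or.inl ⟨h2, hxΩ⟩)
    calc volume (Ω \ Ωs j) ≤ volume (Ω \ Es j) :=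
          measure_mono (Set.diff_subset_diff_right hEsub)
      _ ≤ volume ((t j ∩ Ω) ∪ (({x | ¬ ω x ≤ (j:ℝ)+1} ∩ Ω) ∪
            ({x | ¬ |gL' x| ≤ (j:ℝ)+1} ∩ Ω))) := measure_mono hsub
      _ ≤ volume (t j ∩ Ω) + (volume (({x | ¬ ω x ≤ (j:ℝ)+1} ∩ Ω)) +
            volume (({x | ¬ |gL' x| ≤ (j:ℝ)+1} ∩ Ω))) :=
          (measure_union_le _ _).trans (add_le_add le_rfl (measure_union_le _ _))
      _ = (volume.restrict Ω) (t j) + ((volume.restrict Ω) {x | ¬ ω x ≤ (j:ℝ)+1} +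
            (volume.restrict Ω) {x | ¬ |gL' x| ≤ (j:ℝ)+1}) := by
          rw [Measure.restrict_apply (ht2 j),
            Measure.restrict_apply (show MeasurableSet {x | ¬ ω x ≤ (j:ℝ)+1} from
              (measurableSet_le hωmeas measurable_const).compl),
            Measure.restrict_apply (show MeasurableSet {x | ¬ |gL' x| ≤ (j:ℝ)+1} from
              (measurableSet_le hgL'meas.abs measurable_const).compl)]
  -- the core convergence result
  have hcore : ∀ (s : Set (E n)), MeasurableSet s → s ⊆ Ω → ∀ c : ℝ, 0 ≤ c →
      (∀ x ∈ s, ω x ≤ c) → (∀ x ∈ s, |gL' x| ≤ c) → TendstoUniformlyOn g gL' atTop s →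
      ∀ φ : E n → ℝ, Measurable φ → ∀ Mφ : ℝ, (∀ x, |φ x| ≤ Mφ) →
      Tendsto (fun k => ∫ x in s, f k x * g k x * ω x * φ x) atTop
        (𝓝 (∫ x in s, fL x * gL x * ω x * φ x)) := by
    intro s hs hsΩ c hc hωc hgc hunif φ hφm Mφ hMφ
    have hMφ0 : 0 ≤ Mφ := le_trans (abs_nonneg _) (hMφ 0)
    have hres_le : volume.restrict s ≤ volume.restrict Ω :=
      Measure.restrict_mono hsΩ le_rfl
    have hωs : ∀ᵐ x ∂(volume.restrict s), 0 ≤ ω x := hωnn.filter_mono (ae_mono hres_le)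
    have hgLs : gL =ᵐ[volume.restrict s] gL' := hgLeq.filter_mono (ae_mono hres_le)
    have hrs : (volume.restrict Ω).restrict s = volume.restrict s := by
      rw [Measure.restrict_restrict hs, Set.inter_eq_self_of_subset_left hsΩ]
    have hμrs : μW.restrict s = (volume.restrict s).withDensity
        (fun x => ENNReal.ofReal (ω x)) := by
      rw [hμWdef, restrict_withDensity hs, hrs]
    have hμs_fin : μW s ≠ ⊤ := by
      have h1 : μW s = ∫⁻ x in s, ENNReal.ofReal (ω x) ∂(volume.restrict Ω) := by
        rw [hμWdef, withDensity_apply _ hs]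
      have h2 : ∫⁻ x in s, ENNReal.ofReal (ω x) ∂(volume.restrict Ω)
          ≤ ∫⁻ _ in s, ENNReal.ofReal c ∂(volume.restrict Ω) := by
        refine lintegral_mono_ae ?_
        filter_upwards [ae_restrict_mem hs] with x hx
        exact ENNReal.ofReal_le_ofReal (hωc x hx)
      rw [h1]
      refine ne_top_of_le_ne_top ?_ h2
      rw [lintegral_const]
      exact (ENNReal.mul_lt_top ENNReal.ofReal_lt_top (measure_lt_top _ _)).ne
    haveI hfinμs : IsFiniteMeasure (μW.restrict s) :=
      ⟨by rw [Measure.restrict_apply_univ]; exact lt_top_iff_ne_top.2 hμs_fin⟩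
    set R : ℝ := ((μW s) ^ (1/q)).toReal with hRdef
    have hR0 : 0 ≤ R := ENNReal.toReal_nonneg
    set h₁ : E n → ℝ := fun x => gL' x * φ x with hh₁def
    have hh₁m : Measurable h₁ := hgL'meas.mul hφm
    have hb₁ : ∀ x ∈ s, |h₁ x| ≤ c * Mφ := by
      intro x hx
      rw [hh₁def, abs_mul]
      exact mul_le_mul (hgc x hx) (hMφ x) (abs_nonneg _) hc
    -- integrability of products over s
    have hInt : ∀ (k : ℕ) (h : E n → ℝ) (B : ℝ), Measurable h → (∀ x ∈ s, |h x| ≤ B) →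
        Integrable (fun x => f k x * h x * ω x) (volume.restrict s) := by
      intro k h B hm hb
      have h1 : Integrable (f k) (μW.restrict s) :=
        ((hfk_mem k).restrict s).integrable hp'1
      have h2 : Integrable (fun x => h x * f k x) (μW.restrict s) := by
        refine h1.bdd_mul (c := B) hm.aestronglyMeasurable ?_
        filter_upwards [ae_restrict_mem hs] with x hx
        simpa [Real.norm_eq_abs] using hb x hx
      have h3 : Integrable (fun x => f k x * h x) (μW.restrict s) :=
        h2.congr (Eventually.of_forall fun x => mul_comm _ _)
      rw [hμrs] at h3
      have h4 := (WSC.integrable_wd (volume.restrict s) hωmeas hωs _).mp h3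
      exact h4.congr (Eventually.of_forall fun x => by ring)
    -- splitting, valid when g k is uniformly close to gL' on s
    have hsplit : ∀ k : ℕ, (∀ x ∈ s, |g k x - gL' x| ≤ 1) →
        ∫ x in s, f k x * g k x * ω x * φ x
          = (∫ x in s, f k x * h₁ x * ω x)
            + ∫ x in s, f k x * ((g k x - gL' x) * φ x) * ω x := by
      intro k hb
      have i1 := hInt k h₁ (c * Mφ) hh₁m hb₁
      have i2 : Integrable (fun x => f k x * ((g k x - gL' x) * φ x) * ω x)
          (volume.restrict s) := by
        refine hInt k _ Mφ (((hgmeas k).sub hgL'meas).mul hφm) ?_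
        intro x hx
        rw [abs_mul]
        calc |g k x - gL' x| * |φ x| ≤ 1 * Mφ :=
              mul_le_mul (hb x hx) (hMφ x) (abs_nonneg _) one_pos.le
          _ = Mφ := one_mul _
      rw [← integral_add i1 i2]
      refine integral_congr_ae (Eventually.of_forall fun x => ?_)
      simp only [hh₁def]
      ring
    -- main term convergence
    have hind_meas : Measurable (s.indicator h₁) := hh₁m.indicator hs
    have hind_wLpS : wLpS Ω q ω (s.indicator h₁) < ⊤ := by
      simp only [wLpS]
      refine ENNReal.rpow_lt_top_of_nonneg (by positivity) ?_
      have hb : ∀ᵐ x ∂(volume.restrict Ω),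
          ENNReal.ofReal (|s.indicator h₁ x| ^ q * ω x)
            ≤ ENNReal.ofReal ((c*Mφ)^q * c) := by
        filter_upwards [hωnn] with x hx
        apply ENNReal.ofReal_le_ofReal
        by_cases hxs : x ∈ s
        · have h1 : |s.indicator h₁ x| ≤ c * Mφ := by
            rw [Set.indicator_of_mem hxs]; exact hb₁ x hxs
          have h2 : |s.indicator h₁ x| ^ q ≤ (c*Mφ)^q :=
            Real.rpow_le_rpow (abs_nonneg _) h1 hq0.le
          exact mul_le_mul h2 (hωc x hxs) hx (by positivity)
        · rw [Set.indicator_of_notMem hxs]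
          rw [abs_zero, Real.zero_rpow hq0.ne', zero_mul]
          positivity
      refine ne_top_of_le_ne_top ?_ (lintegral_mono_ae hb)
      rw [lintegral_const]
      exact (ENNReal.mul_lt_top ENNReal.ofReal_lt_top (measure_lt_top _ _)).ne
    have hrw : ∀ F : E n → ℝ,
        ∫ x in Ω, F x * (s.indicator h₁) x * ω x = ∫ x in s, F x * h₁ x * ω x := by
      intro F
      have h5 : (fun x => F x * (s.indicator h₁) x * ω x)
          = s.indicator (fun x => F x * h₁ x * ω x) := by
        funext x
        by_cases hxs : x ∈ s
        · simp [Set.indicator_of_mem hxs]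
        · simp [Set.indicator_of_notMem hxs]
      rw [h5, integral_indicator hs, hrs]
    have hmaincv : Tendsto (fun k => ∫ x in s, f k x * h₁ x * ω x) atTop
        (𝓝 (∫ x in s, fL x * h₁ x * ω x)) := by
      have h0 := hweak (s.indicator h₁) hind_meas.aemeasurable hind_wLpS
      rw [hrw fL] at h0
      exact Tendsto.congr (fun k => hrw (f k)) h0
    -- error term bound
    have hkey : ∀ (k : ℕ) (δ : ℝ), 0 ≤ δ → (∀ x ∈ s, |g k x - gL' x| ≤ δ) →
        |∫ x in s, f k x * ((g k x - gL' x) * φ x) * ω x| ≤ C' * (R * (δ * Mφ)) := by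
      intro k δ hδ hb
      set h₂ : E n → ℝ := fun x => (g k x - gL' x) * φ x with hh₂def
      have hm₂ : Measurable h₂ := ((hgmeas k).sub hgL'meas).mul hφm
      have hbd : ∀ᵐ x ∂(μW.restrict s), ‖h₂ x‖ ≤ δ * Mφ := by
        filter_upwards [ae_restrict_mem hs] with x hx
        rw [Real.norm_eq_abs, hh₂def, abs_mul]
        exact mul_le_mul (hb x hx) (hMφ x) (abs_nonneg _) hδ
      have hsnorm : eLpNorm (s.indicator h₂) p μW ≤ (μW s) ^ (1/q) * ENNReal.ofReal (δ * Mφ) := by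
        rw [eLpNorm_indicator_eq_eLpNorm_restrict hs]
        refine (eLpNorm_le_of_ae_bound hbd).trans ?_
        rw [Measure.restrict_apply_univ, hptoReal, one_div]
      have hmem : MemLp (s.indicator h₂) p μW := by
        refine ⟨(hm₂.indicator hs).aestronglyMeasurable, ?_⟩
        refine lt_of_le_of_lt hsnorm ?_
        exact ENNReal.mul_lt_top
          (ENNReal.rpow_lt_top_of_nonneg (by positivity) hμs_fin) ENNReal.ofReal_lt_top
      have heval : T k (hmem.toLp _) = ∫ x in s, f k x * ((g k x - gL' x) * φ x) * ω x := by
        rw [hT k]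
        have e1 : ∫ x, f k x * ((hmem.toLp _ : Lp ℝ p μW) : E n → ℝ) x ∂μW
            = ∫ x, f k x * s.indicator h₂ x ∂μW :=
          integral_congr_ae ((hmem.coeFn_toLp).mono fun x hx => by simp only [hx])
        rw [e1]
        have e2 : (fun x => f k x * s.indicator h₂ x)
            = s.indicator (fun x => f k x * h₂ x) := by
          funext x
          by_cases hxs : x ∈ s
          · simp [Set.indicator_of_mem hxs]
          · simp [Set.indicator_of_notMem hxs]
        rw [e2, integral_indicator hs, hμrs, WSC.integral_wd _ hωmeas hωs]
        exact integral_congr_ae (Eventually.of_forall fun x => by rw [hh₂def]; ring)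
      have hnorm : ‖hmem.toLp _‖ ≤ R * (δ * Mφ) := by
        rw [Lp.norm_toLp]
        calc (eLpNorm (s.indicator h₂) p μW).toReal
            ≤ ((μW s) ^ (1/q) * ENNReal.ofReal (δ * Mφ)).toReal := by
              refine ENNReal.toReal_mono ?_ hsnorm
              exact (ENNReal.mul_lt_top
                (ENNReal.rpow_lt_top_of_nonneg (by positivity) hμs_fin)
                ENNReal.ofReal_lt_top).ne
          _ = R * (δ * Mφ) := by
              rw [ENNReal.toReal_mul, ENNReal.toReal_ofReal (by positivity), hRdef]
      calc |∫ x in s, f k x * ((g k x - gL' x) * φ x) * ω x| = ‖T k (hmem.toLp _)‖ := by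
            rw [heval, Real.norm_eq_abs]
        _ ≤ ‖T k‖ * ‖hmem.toLp _‖ := (T k).le_opNorm _
        _ ≤ C' * ‖hmem.toLp _‖ := mul_le_mul_of_nonneg_right (hC' k) (norm_nonneg _)
        _ ≤ C' * (R * (δ * Mφ)) := mul_le_mul_of_nonneg_left hnorm hC'0
    -- error term tends to zero
    have herrcv : Tendsto (fun k => ∫ x in s, f k x * ((g k x - gL' x) * φ x) * ω x) atTop
        (𝓝 0) := by
      rw [Metric.tendsto_atTop]
      intro ε hε
      set K : ℝ := (C' + 1) * ((R + 1) * (Mφ + 1)) with hKdef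
      have hK : 0 < K := by rw [hKdef]; positivity
      set δ : ℝ := min (ε / (2 * K)) 1 with hδdef
      have hδpos : 0 < δ := lt_min (by positivity) one_pos
      obtain ⟨N, hN⟩ := Filter.eventually_atTop.mp
        (Metric.tendstoUniformlyOn_iff.mp hunif δ hδpos)
      refine ⟨N, fun k hk => ?_⟩
      have hb : ∀ x ∈ s, |g k x - gL' x| ≤ δ := by
        intro x hx
        have h6 := hN k hk x hx
        rw [Real.dist_eq] at h6
        rw [abs_sub_comm]
        linarith
      have h7 := hkey k δ hδpos.le hb
      rw [Real.dist_eq, sub_zero]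
      have e1 : R * Mφ ≤ (R+1)*(Mφ+1) := by nlinarith
      have e2 : C' * (R*Mφ) ≤ K := by
        rw [hKdef]
        exact mul_le_mul (by linarith) e1 (by positivity) (by linarith)
      have e3 : C' * (R * (δ * Mφ)) ≤ K * δ := by
        have : C' * (R * (δ * Mφ)) = (C' * (R * Mφ)) * δ := by ring
        rw [this]
        exact mul_le_mul_of_nonneg_right e2 hδpos.le
      have e4 : K * δ ≤ K * (ε / (2 * K)) :=
        mul_le_mul_of_nonneg_left (min_le_left _ _) hK.le
      have e5 : K * (ε / (2 * K)) = ε / 2 := by field_simp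
      calc |∫ x in s, f k x * ((g k x - gL' x) * φ x) * ω x| ≤ C' * (R * (δ * Mφ)) := h7
        _ ≤ K * δ := e3
        _ ≤ ε / 2 := by rw [← e5]; exact e4
        _ < ε := by linarith
    -- assemble
    have htarget : ∫ x in s, fL x * gL x * ω x * φ x = ∫ x in s, fL x * h₁ x * ω x := by
      refine integral_congr_ae ?_
      filter_upwards [hgLs] with x hx
      rw [hh₁def]
      simp only
      rw [hx]
      ring
    rw [htarget]
    have hev : (fun k => (∫ x in s, f k x * h₁ x * ω x)
        + ∫ x in s, f k x * ((g k x - gL' x) * φ x) * ω x)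
        =ᶠ[atTop] (fun k => ∫ x in s, f k x * g k x * ω x * φ x) := by
      filter_upwards [Metric.tendstoUniformlyOn_iff.mp hunif 1 one_pos] with k hk
      refine (hsplit k ?_).symm
      intro x hx
      have h6 := hk x hx
      rw [Real.dist_eq] at h6
      rw [abs_sub_comm]
      linarith
    have hfinal := hmaincv.add herrcv
    rw [add_zero] at hfinal
    exact hfinal.congr' hev
  refine ⟨Ωs, fun j => ⟨hΩsmeas j, hΩssub j⟩, hΩsmono, hmeaszero, ?_⟩
  rintro j φ hφm ⟨Mφ, hMφ⟩
  exact hcore (Ωs j) (hΩsmeas j) (hΩssub j) ((j:ℝ)+1) (by positivity)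
    (hΩsω j) (hΩsg j) (hΩsunif j) φ hφm Mφ hMφ
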